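/- arXiv:2101.05461 — 6 statements merged into one kernel-verified Lean document; each statement's English description precedes it below -/
import Mathlib

section
/- Let g be a Lie algebra over ℝ and define ∇ : g → g → g by ∇_X Y = (1/2)•⁅X,Y⁆. Then the curvature of ∇ vanishes identically, i.e. ∇_{⁅X,Y⁆} Z − ∇_X (∇_Y Z) + ∇_Y (∇_X Z) = 0 for all X, Y, Z in g, if and only if g is two-step nilpotent, i.e. ⁅⁅X,Y⁆,Z⁆ = 0 for all X, Y, Z in g (equivalently, the second term of the lower central series of g is trivial). -/
/-- The canonical connection `∇_X Y = (1/2) • ⁅X, Y⁆` on a real Lie algebra `g` is flat,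
i.e. its curvature `R(X,Y)Z = ∇_{⁅X,Y⁆} Z − ∇_X (∇_Y Z) + ∇_Y (∇_X Z)` vanishes
identically, if and only if `g` is two-step nilpotent. -/
theorem canonical_connection_flat_iff_two_step_nilpotent {g : Type*} [LieRing g]
    [LieAlgebra ℝ g] (nabla : g → g → g)
    (hnabla : ∀ X Y : g, nabla X Y = (1/2 : ℝ) • ⁅X, Y⁆) :
    (∀ X Y Z : g, nabla ⁅X, Y⁆ Z - nabla X (nabla Y Z) + nabla Y (nabla X Z) = 0) ↔
      (∀ X Y Z : g, ⁅⁅X, Y⁆, Z⁆ = (0 : g)) := by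
  have key : ∀ X Y Z : g,
      nabla ⁅X, Y⁆ Z - nabla X (nabla Y Z) + nabla Y (nabla X Z)
        = (1/4 : ℝ) • ⁅⁅X, Y⁆, Z⁆ := by
    intro X Y Z
    simp only [hnabla, lie_smul, smul_smul]
    rw [lie_lie X Y Z]
    rw [show ((1:ℝ)/2 * (1/2)) = 1/4 by norm_num]
    module
  constructor
  · intro h X Y Z
    have := h X Y Z
    rw [key] at this
    have h4 : (1/4 : ℝ) ≠ 0 := by norm_num
    exact (smul_eq_zero.mp this).resolve_left h4
  · intro h X Y Z
    rw [key, h, smul_zero]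
end

section
/- Let A be a real n×n matrix and let x : ℝ → ℝⁿ and w : ℝ → ℝ be twice differentiable functions satisfying the geodesic system of the canonical connection in normal coordinates: x''(t) = w'(t) • (A · x'(t)) and w''(t) = 0 for all t. Then w' is constant and the function t ↦ x'(t) − w'(t) • (A · x(t)) is constant; i.e. the right-invariant one-forms dxⁱ − aⁱⱼ xʲ dw and dw yield first integrals of the geodesic flow. -/
section FirstIntegral

variable {E : Type*} [NormedAddCommGroup E] [NormedSpace ℝ E]

theorem hasDerivAt_deriv_sub_smul_apply (L : E →L[ℝ] E) {x : ℝ → E} {v : ℝ → ℝ} {t : ℝ}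
    (hx : DifferentiableAt ℝ x t) (hx' : DifferentiableAt ℝ (deriv x) t)
    (hv : HasDerivAt v 0 t) :
    HasDerivAt (fun s => deriv x s - v s • L (x s))
      (deriv (deriv x) t - v t • L (deriv x t)) t := by
  have hLx : HasDerivAt (fun s => L (x s)) (L (deriv x t)) t :=
    L.hasFDerivAt.comp_hasDerivAt t hx.hasDerivAt
  have h := (hx'.hasDerivAt.sub (hv.smul hLx) :
    HasDerivAt (fun s => deriv x s - v s • L (x s)) _ t)
  rwa [zero_smul, add_zero] at h

theorem deriv_sub_smul_apply_eq_of_deriv_deriv_eq (L : E →L[ℝ] E) {x : ℝ → E} {v : ℝ → ℝ}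
    (hx : Differentiable ℝ x) (hx' : Differentiable ℝ (deriv x))
    (hv : ∀ t, HasDerivAt v 0 t) (hode : ∀ t, deriv (deriv x) t = v t • L (deriv x t))
    (t s : ℝ) : deriv x t - v t • L (x t) = deriv x s - v s • L (x s) := by
  have hconst : ∀ t, HasDerivAt (fun s => deriv x s - v s • L (x s)) 0 t := fun t => by
    simpa [hode t] using hasDerivAt_deriv_sub_smul_apply L (hx t) (hx' t) (hv t)
  exact is_const_of_deriv_eq_zero (fun t => (hconst t).differentiableAt)
    (fun t => (hconst t).deriv) t s

end FirstIntegral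

theorem geodesic_first_integrals_general {n : ℕ} (A : Matrix (Fin n) (Fin n) ℝ)
    (x : ℝ → Fin n → ℝ) (w : ℝ → ℝ)
    (hx : Differentiable ℝ x) (hx' : Differentiable ℝ (deriv x))
    (hw' : Differentiable ℝ (deriv w))
    (hgeo : ∀ t : ℝ, deriv (deriv x) t = deriv w t • A.mulVec (deriv x t))
    (hgeow : ∀ t : ℝ, deriv (deriv w) t = 0) :
    (∀ t : ℝ, deriv w t = deriv w 0) ∧
      (∀ t : ℝ, deriv x t - deriv w t • A.mulVec (x t)
        = deriv x 0 - deriv w 0 • A.mulVec (x 0)) := by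
  have hw'' : ∀ t, HasDerivAt (deriv w) 0 t := fun t => hgeow t ▸ (hw' t).hasDerivAt
  exact ⟨fun t => is_const_of_deriv_eq_zero hw' hgeow t 0, fun t =>
    deriv_sub_smul_apply_eq_of_deriv_deriv_eq (LinearMap.toContinuousLinearMap A.mulVecLin)
      hx hx' hw'' hgeo t 0⟩

/-- First integrals of the geodesic system `ẍ = ẇ • (A ẋ)`, `ẅ = 0` of the canonical
connection in normal coordinates: `ẇ` is constant and `t ↦ ẋ(t) − ẇ(t) • (A · x(t))` is
constant (the first integrals coming from the right-invariant one-forms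
`dxⁱ − aⁱⱼ xʲ dw` and `dw`). -/
theorem geodesic_first_integrals {n : ℕ} (A : Matrix (Fin n) (Fin n) ℝ)
    (x : ℝ → Fin n → ℝ) (w : ℝ → ℝ)
    (hx : Differentiable ℝ x) (hx' : Differentiable ℝ (deriv x))
    (hw : Differentiable ℝ w) (hw' : Differentiable ℝ (deriv w))
    (hgeo : ∀ t : ℝ, deriv (deriv x) t = deriv w t • A.mulVec (deriv x t))
    (hgeow : ∀ t : ℝ, deriv (deriv w) t = 0) :
    (∀ t : ℝ, deriv w t = deriv w 0) ∧
      (∀ t : ℝ, deriv x t - deriv w t • A.mulVec (x t)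
        = deriv x 0 - deriv w 0 • A.mulVec (x 0)) :=
  geodesic_first_integrals_general A x w hx hx' hw' hgeo hgeow
end

section
/- Let A be a real n×n matrix and let x : ℝ → ℝⁿ, w : ℝ → ℝ be twice differentiable functions satisfying x''(t) = w'(t) • (A · x'(t)) and w''(t) = 0 for all t. Then w(t) = w(0) + w'(0)·t and x'(t) = exp((w(t) − w(0)) • A) · x'(0) for all t; i.e. every geodesic of the canonical connection is obtained by integrating a one-parameter subgroup direction. -/
/-!
Since `ẅ = 0`, `ẇ` is a constant `c`, so `w` is affine and `ẋ` solves the autonomous linear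
equation `ẋ' = (c • A) ẋ`, whose solutions are `exp (t • c • A) ẋ(0)`.
-/

open NormedSpace

open scoped Matrix Matrix.Norms.Operator

theorem eq_add_smul_of_hasDerivAt_const {E : Type*} [NormedAddCommGroup E] [NormedSpace ℝ E]
    {f : ℝ → E} {c : E} (hf : ∀ t, HasDerivAt f c t) (t : ℝ) : f t = f 0 + t • c := by
  have h : ∀ s, HasDerivAt (fun s => f s - s • c) 0 s := fun s =>
    ((hf s).sub ((hasDerivAt_id s).smul_const c)).congr_deriv (by rw [one_smul, sub_self])
  have := is_const_of_deriv_eq_zero (fun s => (h s).differentiableAt) (fun s => (h s).deriv) t 0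
  rw [zero_smul, sub_zero] at this
  rw [← this, sub_add_cancel]

theorem HasDerivAt.matrix_mulVec {m n : Type*} [Fintype m] [Fintype n] [DecidableEq n]
    {M : ℝ → Matrix m n ℝ} {v : ℝ → n → ℝ} {M' : Matrix m n ℝ} {v' : n → ℝ} {t : ℝ}
    (hM : HasDerivAt M M' t) (hv : HasDerivAt v v' t) :
    HasDerivAt (fun s => M s *ᵥ v s) (M' *ᵥ v t + M t *ᵥ v') t := by
  let φ : Matrix m n ℝ →L[ℝ] (n → ℝ) →L[ℝ] (m → ℝ) :=
    LinearMap.toContinuousLinearMap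
      (Matrix.toLin'.trans LinearMap.toContinuousLinearMap).toLinearMap
  exact (φ.hasFDerivAt.comp_hasDerivAt t hM).clm_apply hv

/-- Conjugating by `exp (-s • B)` turns a solution of `u' = B u` into a constant. -/
theorem eq_exp_smul_mulVec_of_hasDerivAt {m : Type*} [Fintype m] [DecidableEq m]
    (B : Matrix m m ℝ) {u : ℝ → m → ℝ} (hu : ∀ t, HasDerivAt u (B *ᵥ u t) t) (t : ℝ) :
    u t = exp (t • B) *ᵥ u 0 := by
  have hconj : ∀ s, HasDerivAt (fun s => exp (s • -B) *ᵥ u s) 0 s := fun s =>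
    ((hasDerivAt_exp_smul_const (-B) s).matrix_mulVec (hu s)).congr_deriv <| by
      rw [Matrix.mul_neg, Matrix.neg_mulVec, ← Matrix.mulVec_mulVec, neg_add_cancel]
  have hconst := is_const_of_deriv_eq_zero (fun s => (hconj s).differentiableAt)
    (fun s => (hconj s).deriv) t 0
  have hinv : exp (t • B) * exp (t • -B) = 1 := by
    rw [← Matrix.exp_add_of_commute _ _ ((Commute.refl B).neg_right.smul_left t |>.smul_right t),
      ← smul_add, add_neg_cancel, smul_zero, exp_zero]
  simp only [zero_smul, exp_zero, Matrix.one_mulVec] at hconst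
  rw [← hconst, Matrix.mulVec_mulVec, hinv, Matrix.one_mulVec]

theorem geodesic_one_parameter_subgroup_general {n : ℕ} (A : Matrix (Fin n) (Fin n) ℝ)
    (x : ℝ → Fin n → ℝ) (w : ℝ → ℝ)
    (hx' : Differentiable ℝ (deriv x))
    (hw : Differentiable ℝ w) (hw' : Differentiable ℝ (deriv w))
    (hgeo : ∀ t : ℝ, deriv (deriv x) t = deriv w t • A.mulVec (deriv x t))
    (hgeow : ∀ t : ℝ, deriv (deriv w) t = 0) :
    ∀ t : ℝ, w t = w 0 + deriv w 0 * t ∧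
      deriv x t = (exp ((w t - w 0) • A)).mulVec (deriv x 0) := by
  set c := deriv w 0
  have hw_deriv : ∀ t, deriv w t = c := fun t => is_const_of_deriv_eq_zero hw' hgeow t 0
  have hw_affine : ∀ t, w t = w 0 + c * t := fun t => by
    rw [eq_add_smul_of_hasDerivAt_const (f := w) (fun s => hw_deriv s ▸ (hw s).hasDerivAt) t,
      smul_eq_mul, mul_comm]
  have hx_ode : ∀ t, HasDerivAt (deriv x) ((c • A) *ᵥ deriv x t) t := fun t => by
    simpa [hgeo t, hw_deriv t, Matrix.smul_mulVec] using (hx' t).hasDerivAt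
  intro t
  refine ⟨hw_affine t, ?_⟩
  rw [eq_exp_smul_mulVec_of_hasDerivAt (c • A) hx_ode t, hw_affine t, add_sub_cancel_left,
    smul_smul, mul_comm]

/-- Geodesics of the canonical connection in normal coordinates are translates of
one-parameter subgroups: for the system `ẍ = ẇ • (A ẋ)`, `ẅ = 0` one has
`w(t) = w(0) + ẇ(0)·t` and `ẋ(t) = exp((w(t) − w(0)) • A) · ẋ(0)`. -/
theorem geodesic_one_parameter_subgroup {n : ℕ} (A : Matrix (Fin n) (Fin n) ℝ)
    (x : ℝ → Fin n → ℝ) (w : ℝ → ℝ)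
    (hx : Differentiable ℝ x) (hx' : Differentiable ℝ (deriv x))
    (hw : Differentiable ℝ w) (hw' : Differentiable ℝ (deriv w))
    (hgeo : ∀ t : ℝ, deriv (deriv x) t = deriv w t • A.mulVec (deriv x t))
    (hgeow : ∀ t : ℝ, deriv (deriv w) t = 0) :
    ∀ t : ℝ, w t = w 0 + deriv w 0 * t ∧
      deriv x t = (exp ((w t - w 0) • A)).mulVec (deriv x 0) :=
  geodesic_one_parameter_subgroup_general A x w hx' hw hw' hgeo hgeow
end

section
/- Let A be an invertible real n×n matrix and let ξ : ℝⁿ × ℝ → ℝ be a smooth function (variables (x, w)) satisfying, for every point and every index i: ∂²ξ/∂xᵢ∂w + (1/2)·Σⱼ Aᵢⱼ ∂ξ/∂xⱼ = 0, and ∂²ξ/∂w² = 0. Then ∂ξ/∂xᵢ = 0 identically for every i; i.e. ξ does not depend on the x variables. -/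
section Aux

variable {n : ℕ}

private lemma aux_eval {f : (Fin n → ℝ) × ℝ → ℝ} (hf : ContDiff ℝ (⊤ : ℕ∞) f)
    (v p w : (Fin n → ℝ) × ℝ) :
    fderiv ℝ (fun q => fderiv ℝ f q v) p w = fderiv ℝ (fderiv ℝ f) p w v := by
  have hfd : ContDiff ℝ (⊤ : ℕ∞) (fderiv ℝ f) := hf.fderiv_right (by simp)
  have h1 : DifferentiableAt ℝ (fderiv ℝ f) p := hfd.differentiable (by simp) p
  rw [fderiv_clm_apply h1 (differentiableAt_const v)]
  simp

private lemma aux_swap {f : (Fin n → ℝ) × ℝ → ℝ} (hf : ContDiff ℝ (⊤ : ℕ∞) f)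
    (v p w : (Fin n → ℝ) × ℝ) :
    fderiv ℝ (fun q => fderiv ℝ f q v) p w = fderiv ℝ (fun q => fderiv ℝ f q w) p v := by
  rw [aux_eval hf v p w, aux_eval hf w p v]
  exact (hf.contDiffAt.isSymmSndFDerivAt (by rw [minSmoothness_of_isRCLikeNormedField]; exact WithTop.coe_le_coe.2 le_top)).eq w v

private lemma aux_zero {A : Matrix (Fin n) (Fin n) ℝ} (hA : IsUnit A) {v : Fin n → ℝ}
    (h : ∀ i, ∑ j : Fin n, A i j * v j = 0) : ∀ j, v j = 0 := by
  have h0 : A.mulVec v = A.mulVec 0 := by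
    ext i
    simpa [Matrix.mulVec, dotProduct] using h i
  have := Matrix.mulVec_injective_iff_isUnit.2 hA h0
  intro j; rw [this]; rfl

end Aux

/-- Conditions (ii) and (iii) on the time-component `ξ` of a Lie symmetry of the canonical
geodesic system: if `A` is invertible and the smooth function `ξ(x,w)` satisfies
`ξ_{xᵢ w} + (1/2)·Σⱼ Aᵢⱼ ξ_{xⱼ} = 0` and `ξ_{ww} = 0`, then `ξ` is independent of `x`. -/
theorem xi_independent_of_x {n : ℕ} (A : Matrix (Fin n) (Fin n) ℝ) (hA : IsUnit A)
    (ξ : (Fin n → ℝ) × ℝ → ℝ) (hξ : ContDiff ℝ (⊤ : ℕ∞) ξ)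
    (hii : ∀ (p : (Fin n → ℝ) × ℝ) (i : Fin n),
      fderiv ℝ (fun q => fderiv ℝ ξ q (Pi.single i 1, 0)) p ((0 : Fin n → ℝ), (1 : ℝ))
        + (1/2 : ℝ) * ∑ j : Fin n, A i j * fderiv ℝ ξ p (Pi.single j 1, 0) = 0)
    (hiii : ∀ p : (Fin n → ℝ) × ℝ,
      fderiv ℝ (fun q => fderiv ℝ ξ q ((0 : Fin n → ℝ), (1 : ℝ))) p
        ((0 : Fin n → ℝ), (1 : ℝ)) = 0) :
    ∀ (p : (Fin n → ℝ) × ℝ) (i : Fin n), fderiv ℝ ξ p (Pi.single i 1, 0) = 0 := by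
  set ew : (Fin n → ℝ) × ℝ := ((0 : Fin n → ℝ), (1 : ℝ)) with hew
  set ei : Fin n → (Fin n → ℝ) × ℝ := fun i => (Pi.single i 1, 0) with hei
  -- G = ∂_w ξ, a smooth function
  set G : (Fin n → ℝ) × ℝ → ℝ := fun q => fderiv ℝ ξ q ew with hG
  have hfd : ContDiff ℝ (⊤ : ℕ∞) (fderiv ℝ ξ) := hξ.fderiv_right (by simp)
  have hGsmooth : ContDiff ℝ (⊤ : ℕ∞) G := hfd.clm_apply contDiff_const
  -- the mixed second derivatives m_i p := ∂_w ∂_{x_i} ξ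
  set m : Fin n → ((Fin n → ℝ) × ℝ) → ℝ := fun i p => fderiv ℝ (fun q => fderiv ℝ ξ q (ei i)) p ew with hm
  -- m_i = ∂_{x_i} G
  have hmG : ∀ i p, m i p = fderiv ℝ G p (ei i) := fun i p => aux_swap hξ (ei i) p ew
  -- ∂_w m_i = ∂_{x_i} ∂_w G = 0
  have hdm : ∀ i p, fderiv ℝ (m i) p ew = 0 := by
    intro i p
    have : m i = fun p => fderiv ℝ G p (ei i) := funext (hmG i)
    rw [this, aux_swap hGsmooth (ei i) p ew]
    have : (fun q => fderiv ℝ G q ew) = fun _ => (0 : ℝ) := funext fun q => hiii q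
    rw [this, fderiv_fun_const]
    simp
  -- differentiability of s_j := ∂_{x_j} ξ
  have hsdiff : ∀ (v : (Fin n → ℝ) × ℝ), Differentiable ℝ (fun p => fderiv ℝ ξ p v) :=
    fun v => ((hfd.clm_apply contDiff_const).differentiable (by simp))
  -- differentiate condition (ii) in direction ew:
  have key : ∀ p i, ∑ j : Fin n, A i j * m j p = 0 := by
    intro p i
    have hfun : m i = fun p => -((1/2 : ℝ) * ∑ j, A i j * fderiv ℝ ξ p (ei j)) := by
      funext p
      have := hii p i
      rw [hm]
      simp only [hei, hew]
      linarith
    have hdsum : DifferentiableAt ℝ (fun p => ∑ j, A i j * fderiv ℝ ξ p (ei j)) p := by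
      apply DifferentiableAt.fun_sum
      intro j _
      exact (hsdiff (ei j) p).const_mul _
    have : fderiv ℝ (m i) p ew =
        -((1/2 : ℝ) * ∑ j, A i j * fderiv ℝ (fun p => fderiv ℝ ξ p (ei j)) p ew) := by
      rw [hfun]
      rw [fderiv_fun_neg, fderiv_const_mul hdsum]
      rw [fderiv_fun_sum (fun j _ => ((hsdiff (ei j) p).const_mul _))]
      simp only [ContinuousLinearMap.neg_apply, ContinuousLinearMap.smul_apply,
        ContinuousLinearMap.sum_apply]
      congr 1
      congr 1
      refine Finset.sum_congr rfl fun j _ => ?_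
      rw [fderiv_const_mul (hsdiff (ei j) p)]
      simp
    rw [hdm i p] at this
    have h2 : ∑ j, A i j * fderiv ℝ (fun p => fderiv ℝ ξ p (ei j)) p ew = 0 := by linarith
    simpa [hm] using h2
  -- hence m = 0 everywhere
  have hmzero : ∀ p j, m j p = 0 := fun p => aux_zero hA (fun i => key p i)
  -- hence from (ii), ∑ A i j * s_j = 0, hence s = 0
  intro p i
  have h3 : ∀ i, ∑ j : Fin n, A i j * fderiv ℝ ξ p (Pi.single j 1, 0) = 0 := by
    intro i
    have := hii p i
    have hm0 : m i p = 0 := hmzero p i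
    rw [hm] at hm0
    simp only [hei, hew] at hm0
    rw [hm0] at this
    have : (1/2 : ℝ) * ∑ j : Fin n, A i j * fderiv ℝ ξ p (Pi.single j 1, 0) = 0 := by linarith
    linarith
  exact aux_zero hA h3 i
end

section
/- Let A be an invertible real n×n matrix and let f : ℝ × ℝ → ℝⁿ be a smooth function of the variables (t, w) satisfying ∂²f/∂t∂w = (1/2)•(A · ∂f/∂t) and ∂²f/∂w² = A · (∂f/∂w) everywhere. Then ∂f/∂t = 0 identically. -/
/-- Conditions (xi) and (xii) on the components `ηⁱ` of a Lie symmetry of the canonical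
geodesic system: if `A` is invertible and the smooth function `f(t,w)` with values in `ℝⁿ`
satisfies `f_{tw} = (1/2) • (A · f_t)` and `f_{ww} = A · f_w`, then `f_t = 0`. -/
theorem eta_t_vanishes {n : ℕ} (A : Matrix (Fin n) (Fin n) ℝ) (hA : IsUnit A)
    (f : ℝ × ℝ → Fin n → ℝ) (hf : ContDiff ℝ (⊤ : ℕ∞) f)
    (hxi : ∀ p : ℝ × ℝ,
      fderiv ℝ (fun q => fderiv ℝ f q ((1 : ℝ), (0 : ℝ))) p ((0 : ℝ), (1 : ℝ))
        = (1/2 : ℝ) • A.mulVec (fderiv ℝ f p ((1 : ℝ), (0 : ℝ))))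
    (hxii : ∀ p : ℝ × ℝ,
      fderiv ℝ (fun q => fderiv ℝ f q ((0 : ℝ), (1 : ℝ))) p ((0 : ℝ), (1 : ℝ))
        = A.mulVec (fderiv ℝ f p ((0 : ℝ), (1 : ℝ)))) :
    ∀ p : ℝ × ℝ, fderiv ℝ f p ((1 : ℝ), (0 : ℝ)) = 0 := by
  intro p
  -- symmetry of second derivatives, in directional form
  have key : ∀ (g : ℝ × ℝ → Fin n → ℝ), ContDiff ℝ (⊤ : ℕ∞) g →
      (∀ p (u v : ℝ × ℝ), fderiv ℝ (fun q => fderiv ℝ g q v) p u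
        = fderiv ℝ (fun q => fderiv ℝ g q u) p v) := by
    intro g hg p u v
    have hgd : Differentiable ℝ g := hg.differentiable (by simp)
    have hF : ContDiff ℝ (⊤ : ℕ∞) (fderiv ℝ g) := hg.fderiv_right (by simp)
    have hFd : Differentiable ℝ (fderiv ℝ g) := hF.differentiable (by simp)
    have heval : ∀ (w u : ℝ × ℝ),
        fderiv ℝ (fun q => fderiv ℝ g q w) p u = fderiv ℝ (fderiv ℝ g) p u w := by
      intro w u
      have h1 := ((ContinuousLinearMap.apply ℝ (Fin n → ℝ) w).hasFDerivAt.comp p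
        (hFd p).hasFDerivAt).fderiv
      have h2 : (fun q => fderiv ℝ g q w)
          = (ContinuousLinearMap.apply ℝ (Fin n → ℝ) w) ∘ (fderiv ℝ g) := rfl
      rw [h2, h1]; rfl
    have hsym := second_derivative_symmetric (f := g) (f' := fderiv ℝ g)
      (f'' := fderiv ℝ (fderiv ℝ g) p) (fun y => (hgd y).hasFDerivAt) (hFd p).hasFDerivAt
    rw [heval, heval, hsym]
  have hF : ContDiff ℝ (⊤ : ℕ∞) (fderiv ℝ f) := hf.fderiv_right (by simp)
  have hgC : ContDiff ℝ (⊤ : ℕ∞) (fun q => fderiv ℝ f q ((1:ℝ), (0:ℝ))) :=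
    (ContinuousLinearMap.apply ℝ (Fin n → ℝ) ((1:ℝ), (0:ℝ))).contDiff.comp hF
  have hhC : ContDiff ℝ (⊤ : ℕ∞) (fun q => fderiv ℝ f q ((0:ℝ), (1:ℝ))) :=
    (ContinuousLinearMap.apply ℝ (Fin n → ℝ) ((0:ℝ), (1:ℝ))).contDiff.comp hF
  -- f_wt = f_tw = (1/2) A f_t
  have h1 : ∀ q, fderiv ℝ (fun q => fderiv ℝ f q ((0:ℝ), (1:ℝ))) q ((1:ℝ), (0:ℝ))
      = (1/2 : ℝ) • A.mulVec (fderiv ℝ f q ((1:ℝ), (0:ℝ))) := by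
    intro q
    rw [key f hf q ((1:ℝ),(0:ℝ)) ((0:ℝ),(1:ℝ)), hxi q]
  -- derivative of a CLM composed with a smooth map
  have comp_deriv : ∀ (L : (Fin n → ℝ) →L[ℝ] (Fin n → ℝ)) (g : ℝ × ℝ → Fin n → ℝ),
      ContDiff ℝ (⊤ : ℕ∞) g → ∀ q u, fderiv ℝ (fun x => L (g x)) q u = L (fderiv ℝ g q u) := by
    intro L g hg q u
    have hc : (fun x => L (g x)) = ⇑L ∘ g := rfl
    rw [hc, (L.hasFDerivAt.comp q ((hg.differentiable (by simp)) q).hasFDerivAt).fderiv]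
    rfl
  let L : (Fin n → ℝ) →L[ℝ] (Fin n → ℝ) := LinearMap.toContinuousLinearMap (Matrix.mulVecLin A)
  have hL : ∀ x, L x = A.mulVec x := fun x => rfl
  -- third derivative computed two ways
  have lhs : fderiv ℝ (fun q => fderiv ℝ (fun r => fderiv ℝ f r ((0:ℝ),(1:ℝ))) q ((1:ℝ),(0:ℝ))) p ((0:ℝ),(1:ℝ))
      = (1/2 : ℝ) • ((1/2 : ℝ) • A.mulVec (A.mulVec (fderiv ℝ f p ((1:ℝ),(0:ℝ))))) := by
    have e1 : (fun q => fderiv ℝ (fun r => fderiv ℝ f r ((0:ℝ),(1:ℝ))) q ((1:ℝ),(0:ℝ)))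
        = fun q => ((1/2 : ℝ) • L) (fderiv ℝ f q ((1:ℝ),(0:ℝ))) := by
      funext q; rw [h1 q, ContinuousLinearMap.smul_apply, hL]
    rw [e1, comp_deriv _ _ hgC, ContinuousLinearMap.smul_apply, hL, hxi p,
      Matrix.mulVec_smul]
  have rhs : fderiv ℝ (fun q => fderiv ℝ (fun r => fderiv ℝ f r ((0:ℝ),(1:ℝ))) q ((0:ℝ),(1:ℝ))) p ((1:ℝ),(0:ℝ))
      = (1/2 : ℝ) • A.mulVec (A.mulVec (fderiv ℝ f p ((1:ℝ),(0:ℝ)))) := by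
    have e2 : (fun q => fderiv ℝ (fun r => fderiv ℝ f r ((0:ℝ),(1:ℝ))) q ((0:ℝ),(1:ℝ)))
        = fun q => L (fderiv ℝ f q ((0:ℝ),(1:ℝ))) := by
      funext q; rw [hxii q, hL]
    rw [e2, comp_deriv _ _ hhC, hL, h1 p, Matrix.mulVec_smul]
  -- by symmetry (for h) lhs = rhs
  have hsymh := key (fun q => fderiv ℝ f q ((0:ℝ),(1:ℝ))) hhC p ((0:ℝ),(1:ℝ)) ((1:ℝ),(0:ℝ))
  rw [lhs, rhs] at hsymh
  -- deduce A (A f_t) = 0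
  have h0 : A.mulVec (A.mulVec (fderiv ℝ f p ((1:ℝ),(0:ℝ)))) = 0 := by
    have hs : ((1/2:ℝ)*(1/2) - 1/2) • (A.mulVec (A.mulVec (fderiv ℝ f p ((1:ℝ),(0:ℝ))))) = 0 := by
      rw [sub_smul, ← smul_smul, hsymh, sub_self]
    have hne : ((1/2:ℝ)*(1/2) - 1/2) ≠ 0 := by norm_num
    exact (smul_eq_zero.mp hs).resolve_left hne
  -- invertibility
  have hinj : Function.Injective A.mulVec := Matrix.mulVec_injective_iff_isUnit.mpr hA
  have h2 : A.mulVec (fderiv ℝ f p ((1:ℝ),(0:ℝ))) = 0 := by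
    apply hinj
    simpa using h0
  apply hinj
  simpa using h2
end

section
/- Let A be a real n×n matrix. On the space ℝ × (ℝⁿ × ℝ) × (ℝⁿ × ℝ) with coordinates (t, (x, w), (u, v)), define the geodesic spray Γ(t,(x,w),(u,v)) = (1, (u, v), (v • (A·u), 0)) and the prolonged dilation field X(t,(x,w),(u,v)) = (0, (x, 0), (u, 0)). Then X commutes with Γ: for every point p, (D Γ)(p)(X(p)) − (D X)(p)(Γ(p)) = 0, where D denotes the Fréchet derivative; hence the dilation field xⁱ∂/∂xⁱ is a Lie symmetry of the geodesic system ẍ = ẇ•(Aẋ), ẅ = 0. -/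
/-!
The dilation field is a linear map `X`, and `1 + s • X` is the dilation
`(x, u) ↦ ((1 + s) x, (1 + s) u)`. The spray commutes with these dilations,
`Γ (p + s • X p) = Γ p + s • X (Γ p)`, since its components are homogeneous of degree one in `u`.
Differentiating at `s = 0` gives `DΓ(p)(X p) = X (Γ p) = DX(p)(Γ p)`.
-/

open Matrix

section LineDeriv

variable {𝕜 E F : Type*} [NontriviallyNormedField 𝕜] [NormedAddCommGroup E] [NormedSpace 𝕜 E]
  [NormedAddCommGroup F] [NormedSpace 𝕜 F]

theorem fderiv_apply_eq_of_map_add_smul {f : E → F} {x v : E} {w : F}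
    (hf : DifferentiableAt 𝕜 f x) (hline : ∀ t : 𝕜, f (x + t • v) = f x + t • w) :
    fderiv 𝕜 f x v = w := by
  rw [← hf.lineDeriv_eq_fderiv, lineDeriv, funext hline, deriv_const_add]
  exact ((hasDerivAt_id (0 : 𝕜)).smul_const w).deriv.trans (one_smul 𝕜 w)

theorem fderiv_apply_sub_fderiv_clm_eq_zero {f : E → E} {L : E →L[𝕜] E} {x : E}
    (hf : DifferentiableAt 𝕜 f x) (hline : ∀ t : 𝕜, f (x + t • L x) = f x + t • L (f x)) :
    fderiv 𝕜 f x (L x) - fderiv 𝕜 L x (f x) = 0 := by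
  rw [fderiv_apply_eq_of_map_add_smul hf hline, L.fderiv, sub_self]

end LineDeriv

local notation "PhaseSpace" n => ℝ × ((Fin n → ℝ) × ℝ) × ((Fin n → ℝ) × ℝ)

variable {n : ℕ}

def dilationField (n : ℕ) : (PhaseSpace n) →L[ℝ] PhaseSpace n :=
  (0 : ℝ →L[ℝ] ℝ).prodMap (((ContinuousLinearMap.id ℝ _).prodMap 0).prodMap
    ((ContinuousLinearMap.id ℝ _).prodMap 0))

theorem dilationField_apply (p : PhaseSpace n) :
    dilationField n p = (0, (p.2.1.1, 0), (p.2.2.1, 0)) :=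
  rfl

def geodesicSpray (A : Matrix (Fin n) (Fin n) ℝ) (p : PhaseSpace n) : PhaseSpace n :=
  (1, (p.2.2.1, p.2.2.2), (p.2.2.2 • A *ᵥ p.2.2.1, 0))

theorem differentiable_geodesicSpray (A : Matrix (Fin n) (Fin n) ℝ) :
    Differentiable ℝ (geodesicSpray A) := by
  have hA : Differentiable ℝ (A *ᵥ ·) :=
    (LinearMap.toContinuousLinearMap A.mulVecLin).differentiable
  unfold geodesicSpray
  fun_prop

theorem geodesicSpray_add_smul_dilationField (A : Matrix (Fin n) (Fin n) ℝ) (p : PhaseSpace n)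
    (s : ℝ) :
    geodesicSpray A (p + s • dilationField n p) =
      geodesicSpray A p + s • dilationField n (geodesicSpray A p) := by
  simp [geodesicSpray, dilationField_apply, mulVec_add, mulVec_smul, smul_comm s, Prod.ext_iff]

/-- The dilation field `xⁱ ∂/∂xⁱ` (with prolongation `uⁱ ∂/∂uⁱ`) is a Lie symmetry of the
geodesic system `ẍ = ẇ • (A ẋ)`, `ẅ = 0`: on phase space with coordinates
`(t, (x, w), (u, v))`, the prolonged field `X(p) = (0, (x, 0), (u, 0))` commutes with the
geodesic spray `Γ(p) = (1, (u, v), (v • (A·u), 0))`. -/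
theorem dilation_is_lie_symmetry {n : ℕ} (A : Matrix (Fin n) (Fin n) ℝ)
    (Γ X : ℝ × ((Fin n → ℝ) × ℝ) × ((Fin n → ℝ) × ℝ) →
      ℝ × ((Fin n → ℝ) × ℝ) × ((Fin n → ℝ) × ℝ))
    (hΓ : ∀ p : ℝ × ((Fin n → ℝ) × ℝ) × ((Fin n → ℝ) × ℝ),
      Γ p = (1, (p.2.2.1, p.2.2.2), (p.2.2.2 • A.mulVec p.2.2.1, 0)))
    (hX : ∀ p : ℝ × ((Fin n → ℝ) × ℝ) × ((Fin n → ℝ) × ℝ),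
      X p = (0, (p.2.1.1, 0), (p.2.2.1, 0))) :
    ∀ p : ℝ × ((Fin n → ℝ) × ℝ) × ((Fin n → ℝ) × ℝ),
      fderiv ℝ Γ p (X p) - fderiv ℝ X p (Γ p) = 0 := by
  obtain rfl : Γ = geodesicSpray A := funext hΓ
  obtain rfl : X = dilationField n := funext hX
  exact fun p => fderiv_apply_sub_fderiv_clm_eq_zero (differentiable_geodesicSpray A p)
    (geodesicSpray_add_smul_dilationField A p)
end
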